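/- arXiv:2510.25165 — 2 statements merged into one kernel-verified Lean document; each statement's English description precedes it below -/
import Mathlib

section
/- Let X be a real random variable with E[X] = 0, E[X^2] = σ^2 > 0, and E[X^4] ≤ 3σ^4. Then Pr[ |X| ≥ σ/√3 ] ≥ 2/11. -/
open MeasureTheory

/-- Paley–Zygmund / fourth-moment method: a centered random variable with variance `σ²`
and fourth moment at most `3σ⁴` satisfies `Pr[|X| ≥ σ/√3] ≥ 2/11`. -/
theorem stmt3 {Ω : Type*} [MeasurableSpace Ω] (μ : Measure Ω) [IsProbabilityMeasure μ]
    (X : Ω → ℝ) (hmeas : Measurable X)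
    (hint4 : Integrable (fun ω => (X ω) ^ 4) μ)
    (σ : ℝ) (hσ : 0 < σ)
    (hmean : ∫ ω, X ω ∂μ = 0)
    (hvar : ∫ ω, (X ω) ^ 2 ∂μ = σ ^ 2)
    (h4 : ∫ ω, (X ω) ^ 4 ∂μ ≤ 3 * σ ^ 4) :
    ENNReal.ofReal (2 / 11) ≤ μ {ω | σ / Real.sqrt 3 ≤ |X ω|} := by
  classical
  set A : Set Ω := {ω | σ / Real.sqrt 3 ≤ |X ω|} with hAdef
  have hA : MeasurableSet A := measurableSet_le measurable_const hmeas.abs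
  have h3 : (Real.sqrt 3) ^ 2 = 3 := Real.sq_sqrt (by norm_num)
  have h3pos : (0:ℝ) < Real.sqrt 3 := Real.sqrt_pos.mpr (by norm_num)
  -- integrability of X^2
  have hX2 : Integrable (fun ω => (X ω) ^ 2) μ := by
    refine (hint4.add (integrable_const 1)).mono'
      ((hmeas.pow_const 2).aestronglyMeasurable) ?_
    filter_upwards with ω
    simp only [Pi.add_apply, Real.norm_eq_abs, abs_of_nonneg (sq_nonneg (X ω))]
    nlinarith [sq_nonneg ((X ω)^2 - 1)]
  -- the centered function Z
  set Z : Ω → ℝ := fun ω => (X ω) ^ 2 - σ ^ 2 / 3 with hZdef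
  have hZmeas : Measurable Z := (hmeas.pow_const 2).sub measurable_const
  have hZint : Integrable Z μ := hX2.sub (integrable_const _)
  have hZint_val : ∫ ω, Z ω ∂μ = 2 * σ ^ 2 / 3 := by
    rw [integral_sub hX2 (integrable_const _), hvar, integral_const]
    simp; ring
  have hZsq_eq : (fun ω => Z ω ^ 2)
      = fun ω => ((X ω) ^ 4 - (2 * σ ^ 2 / 3) * (X ω) ^ 2) + σ ^ 4 / 9 := by
    funext ω; simp only [hZdef]; ring
  have hsub : Integrable (fun ω => (X ω) ^ 4 - 2 * σ ^ 2 / 3 * (X ω) ^ 2) μ :=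
    hint4.sub (hX2.const_mul _)
  have hZsq : Integrable (fun ω => Z ω ^ 2) μ := by
    rw [hZsq_eq]; exact hsub.add (integrable_const _)
  have hZsq_val : ∫ ω, Z ω ^ 2 ∂μ ≤ 22 * σ ^ 4 / 9 := by
    rw [hZsq_eq, integral_add hsub (integrable_const _),
      integral_sub hint4 (hX2.const_mul _), integral_const_mul, hvar, integral_const]
    simp only [measure_univ, probReal_univ, ENNReal.toReal_one, smul_eq_mul, one_mul]
    nlinarith
  -- indicator function
  set g : Ω → ℝ := A.indicator (fun _ => (1:ℝ)) with hgdef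
  have hg_nonneg : ∀ ω, 0 ≤ g ω := fun ω => Set.indicator_nonneg (fun _ _ => zero_le_one) ω
  have hg_le_one : ∀ ω, g ω ≤ 1 := by
    intro ω; by_cases h : ω ∈ A <;> simp [hgdef, h]
  have hg_meas : Measurable g := (measurable_const.indicator hA)
  -- pointwise: Z ≤ |Z| * g
  have hpt : ∀ ω, Z ω ≤ |Z ω| * g ω := by
    intro ω
    by_cases h : ω ∈ A
    · simp only [hgdef, Set.indicator_of_mem h, mul_one]
      exact le_abs_self _
    · simp only [hgdef, Set.indicator_of_notMem h, mul_zero]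
      have hx : |X ω| < σ / Real.sqrt 3 := not_le.mp h
      have hx2 : (X ω) ^ 2 < σ ^ 2 / 3 := by
        have h1 : |X ω| ^ 2 < (σ / Real.sqrt 3) ^ 2 := by
          apply pow_lt_pow_left₀ hx (abs_nonneg _)
          norm_num
        rw [sq_abs] at h1
        calc (X ω)^2 < (σ / Real.sqrt 3)^2 := h1
          _ = σ ^ 2 / 3 := by rw [div_pow, h3]
      simp only [hZdef]; linarith
  -- integrability of |Z| * g
  have hZg_int : Integrable (fun ω => |Z ω| * g ω) μ := by
    refine hZint.abs.mono' ((hZmeas.abs.mul hg_meas).aestronglyMeasurable) ?_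
    filter_upwards with ω
    rw [Real.norm_eq_abs, abs_mul, abs_abs, abs_of_nonneg (hg_nonneg ω)]
    calc |Z ω| * g ω ≤ |Z ω| * 1 := by
          exact mul_le_mul_of_nonneg_left (hg_le_one ω) (abs_nonneg _)
      _ = |Z ω| := mul_one _
  -- step 1: E Z ≤ E |Z| g
  have step1 : 2 * σ ^ 2 / 3 ≤ ∫ ω, |Z ω| * g ω ∂μ := by
    rw [← hZint_val]
    exact integral_mono hZint hZg_int hpt
  -- Cauchy-Schwarz
  have hconj : Real.HolderConjugate 2 2 := by constructor <;> norm_num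
  have hZ2mem : MemLp (fun ω => |Z ω|) (ENNReal.ofReal 2) μ := by
    rw [show ENNReal.ofReal 2 = 2 by norm_num]
    refine (memLp_two_iff_integrable_sq hZmeas.abs.aestronglyMeasurable).mpr ?_
    refine hZsq.congr ?_
    filter_upwards with ω
    rw [sq_abs]
  have hgmem : MemLp g (ENNReal.ofReal 2) μ := by
    rw [show ENNReal.ofReal 2 = 2 by norm_num]
    exact memLp_top_of_bound hg_meas.aestronglyMeasurable 1
      (Filter.Eventually.of_forall (fun ω => by
        rw [Real.norm_eq_abs, abs_of_nonneg (hg_nonneg ω)]; exact hg_le_one ω))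
      |>.mono_exponent le_top
  have CS := integral_mul_le_Lp_mul_Lq_of_nonneg (μ := μ) hconj
    (Filter.Eventually.of_forall (fun ω => abs_nonneg (Z ω)))
    (Filter.Eventually.of_forall hg_nonneg) hZ2mem hgmem
  -- convert rpow to pow
  have hZrpow : ∫ ω, |Z ω| ^ (2:ℝ) ∂μ = ∫ ω, Z ω ^ 2 ∂μ := by
    refine integral_congr_ae (Filter.Eventually.of_forall fun ω => ?_)
    show |Z ω| ^ (2:ℝ) = Z ω ^ 2
    rw [Real.rpow_two, sq_abs]
  have hgrpow : ∫ ω, g ω ^ (2:ℝ) ∂μ = (μ A).toReal := by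
    have : ∀ ω, g ω ^ (2:ℝ) = g ω := by
      intro ω; by_cases h : ω ∈ A <;> simp [hgdef, h, Real.zero_rpow]
    rw [integral_congr_ae (Filter.Eventually.of_forall this), hgdef,
      integral_indicator_const (1:ℝ) hA]
    simp; rfl
  rw [hZrpow, hgrpow] at CS
  set p : ℝ := (μ A).toReal with hp
  have hp0 : 0 ≤ p := ENNReal.toReal_nonneg
  set I2 : ℝ := ∫ ω, Z ω ^ 2 ∂μ with hI2
  have hI2nn : 0 ≤ I2 := integral_nonneg (fun ω => sq_nonneg _)
  have key : 2 * σ ^ 2 / 3 ≤ I2 ^ ((1:ℝ)/2) * p ^ ((1:ℝ)/2) := step1.trans CS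
  have hsq : (2 * σ ^ 2 / 3) ^ 2 ≤ I2 * p := by
    have h1 : (I2 ^ ((1:ℝ)/2) * p ^ ((1:ℝ)/2)) ^ 2 = I2 * p := by
      rw [mul_pow, ← Real.rpow_natCast (I2 ^ ((1:ℝ)/2)) 2, ← Real.rpow_natCast (p ^ ((1:ℝ)/2)) 2,
        ← Real.rpow_mul hI2nn, ← Real.rpow_mul hp0]
      norm_num
    calc (2 * σ ^ 2 / 3) ^ 2 ≤ (I2 ^ ((1:ℝ)/2) * p ^ ((1:ℝ)/2)) ^ 2 := by
          apply pow_le_pow_left₀ (by positivity) key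
      _ = I2 * p := h1
  have hfinal : 2 / 11 ≤ p := by
    have hσ4 : 0 < σ ^ 4 := by positivity
    nlinarith [mul_le_mul_of_nonneg_right hZsq_val hp0]
  calc ENNReal.ofReal (2/11) ≤ ENNReal.ofReal p := ENNReal.ofReal_le_ofReal hfinal
    _ = μ A := ENNReal.ofReal_toReal (measure_ne_top μ A)
end

section
/- Let 0 < δ < 0.49 and let 𝒞 be a finite family of functions {0,1}^k → {0,1} with |𝒞| < (1/2)·exp(2(1/2-δ)^2 · 2^k). Then there exists a function g : {0,1}^k → {0,1} such that for every C ∈ 𝒞, Pr_{x∼{0,1}^k}[g(x) = C(x)] < 1 - δ. -/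
open Finset
open scoped Classical

lemma powerset_exp_sum {α : Type*} [Fintype α] (r : ℝ) :
    ∑ S ∈ (Finset.univ : Finset α).powerset, r ^ S.card = (r + 1) ^ Fintype.card α := by
  rw [Finset.sum_powerset_apply_card (fun j => r ^ j), add_pow, Finset.card_univ]
  refine Finset.sum_congr rfl fun j _ => ?_
  simp [nsmul_eq_mul]; ring

lemma bad_card_eq {α : Type*} [DecidableEq α] [Fintype α] (C : α → Bool) (m : ℝ) :
    (Finset.univ.filter (fun g : α → Bool =>
        m ≤ ((Finset.univ.filter (fun x => g x = C x)).card : ℝ))).card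
      = ((Finset.univ : Finset α).powerset.filter (fun S => m ≤ (S.card : ℝ))).card := by
  apply Finset.card_nbij' (fun g => Finset.univ.filter (fun x => g x = C x))
      (fun S => fun x => if x ∈ S then C x else !C x)
  · intro g hg
    simp only [Finset.mem_coe, Finset.mem_filter, Finset.mem_univ, true_and] at hg ⊢
    exact ⟨Finset.mem_powerset.2 (Finset.filter_subset _ _), hg⟩
  · intro S hS
    simp only [Finset.mem_coe, Finset.mem_filter, Finset.mem_powerset, Finset.mem_univ, true_and] at hS ⊢
    have : (Finset.univ.filter (fun x => (if x ∈ S then C x else !C x) = C x)) = S := by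
      ext x
      by_cases hx : x ∈ S <;> simp [hx]
    rw [this]; exact hS.2
  · intro g hg
    funext x
    by_cases hx : g x = C x <;> simp [hx]
    revert hx; cases g x <;> cases C x <;> simp
  · intro S hS
    ext x
    by_cases hx : x ∈ S <;> simp [hx]

lemma chernoff_tail {α : Type*} [Fintype α] (δ : ℝ) (hδ : 0 ≤ 1/2 - δ) :
    (((Finset.univ : Finset α).powerset.filter
        (fun S => (1 - δ) * Fintype.card α ≤ (S.card : ℝ))).card : ℝ)
      ≤ 2 ^ Fintype.card α * Real.exp (-(2 * (1/2 - δ)^2 * Fintype.card α)) := by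
  set ε : ℝ := 1/2 - δ with hε
  set t : ℝ := 4 * ε with ht
  have ht0 : 0 ≤ t := by positivity
  set n : ℕ := Fintype.card α with hn
  set N : ℝ := (n : ℝ) with hN
  calc (((Finset.univ : Finset α).powerset.filter
        (fun S => (1 - δ) * N ≤ (S.card : ℝ))).card : ℝ)
      = ∑ S ∈ (Finset.univ : Finset α).powerset.filter
          (fun S => (1 - δ) * N ≤ (S.card : ℝ)), (1:ℝ) := by simp
    _ ≤ ∑ S ∈ (Finset.univ : Finset α).powerset.filter
          (fun S => (1 - δ) * N ≤ (S.card : ℝ)),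
          Real.exp (t * ((S.card : ℝ) - (1 - δ) * N)) := by
        refine Finset.sum_le_sum fun S hS => ?_
        have h := (Finset.mem_filter.1 hS).2
        exact Real.one_le_exp (by nlinarith)
    _ ≤ ∑ S ∈ (Finset.univ : Finset α).powerset,
          Real.exp (t * ((S.card : ℝ) - (1 - δ) * N)) := by
        exact Finset.sum_le_sum_of_subset_of_nonneg (Finset.filter_subset _ _)
          (fun _ _ _ => (Real.exp_pos _).le)
    _ = Real.exp (-(t * (1 - δ) * N)) * ∑ S ∈ (Finset.univ : Finset α).powerset,
          (Real.exp t) ^ S.card := by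
        rw [Finset.mul_sum]
        refine Finset.sum_congr rfl fun S _ => ?_
        rw [← Real.exp_nat_mul, ← Real.exp_add]
        ring_nf
    _ = Real.exp (-(t * (1 - δ) * N)) * (Real.exp t + 1) ^ n := by
        rw [powerset_exp_sum]
    _ ≤ Real.exp (-(t * (1 - δ) * N)) * (2 * Real.exp (2*ε + 2*ε^2)) ^ n := by
        refine mul_le_mul_of_nonneg_left (pow_le_pow_left₀ (by positivity) ?_ n)
          (Real.exp_pos _).le
        have h1 : Real.exp t + 1 = Real.exp (2*ε) * (Real.exp (2*ε) + Real.exp (-(2*ε))) := by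
          rw [mul_add, ← Real.exp_add, ← Real.exp_add]
          rw [ht]; norm_num; linarith
        have h2 : Real.exp (2*ε) + Real.exp (-(2*ε)) = 2 * Real.cosh (2*ε) := by
          rw [Real.cosh_eq]; ring
        have h3 : Real.cosh (2*ε) ≤ Real.exp (2*ε^2) := by
          have := Real.cosh_le_exp_half_sq (2*ε)
          convert this using 2
          ring
        calc Real.exp t + 1 = Real.exp (2*ε) * (2 * Real.cosh (2*ε)) := by rw [h1, h2]
          _ ≤ Real.exp (2*ε) * (2 * Real.exp (2*ε^2)) := by
              nlinarith [Real.exp_pos (2*ε)]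
          _ = 2 * Real.exp (2*ε + 2*ε^2) := by rw [Real.exp_add]; ring
    _ = 2 ^ n * Real.exp (-(2 * ε^2 * N)) := by
        rw [mul_pow, ← Real.exp_nat_mul, ← mul_assoc, mul_comm (Real.exp _), mul_assoc,
          ← Real.exp_add]
        congr 1
        have : (1:ℝ) - δ = 1/2 + ε := by rw [hε]; ring
        rw [this, ht, hN]
        ring

lemma perC_bound (k : ℕ) (δ : ℝ) (hδ : 0 ≤ 1/2 - δ) (C : (Fin k → Bool) → Bool) :
    ((Finset.univ.filter (fun g : (Fin k → Bool) → Bool =>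
        (1 - δ) * (2:ℝ) ^ k ≤ ((Finset.univ.filter (fun x => g x = C x)).card : ℝ))).card : ℝ)
      ≤ 2 ^ (2^k) * Real.exp (-(2 * (1/2 - δ)^2 * (2:ℝ)^k)) := by
  have hc : Fintype.card (Fin k → Bool) = 2^k := by simp
  have h := chernoff_tail (α := Fin k → Bool) δ hδ
  rw [hc] at h
  push_cast at h
  rw [bad_card_eq C ((1 - δ) * (2:ℝ) ^ k)]
  exact h

/-- Union bound + Chernoff: if `𝒞` is a family of at most `(1/2)·exp(2(1/2-δ)²·2^k)`
functions, then some `g : {0,1}^k → {0,1}` disagrees with every `C ∈ 𝒞` on more than a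
`δ`-fraction of inputs. -/
theorem stmt11 (k : ℕ) (δ : ℝ) (hδ0 : 0 < δ) (hδ1 : δ < 0.49)
    (𝒞 : Finset ((Fin k → Bool) → Bool))
    (hcard : (𝒞.card : ℝ) < (1 / 2) * Real.exp (2 * (1 / 2 - δ) ^ 2 * 2 ^ k)) :
    ∃ g : (Fin k → Bool) → Bool, ∀ C ∈ 𝒞,
      ((Finset.univ.filter (fun x => g x = C x)).card : ℝ) / 2 ^ k < 1 - δ := by
  have hδ : 0 ≤ 1/2 - δ := by norm_num at hδ1 ⊢; linarith
  set BC : ((Fin k → Bool) → Bool) → Finset ((Fin k → Bool) → Bool) :=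
    fun C => Finset.univ.filter (fun g =>
      (1 - δ) * (2:ℝ) ^ k ≤ ((Finset.univ.filter (fun x => g x = C x)).card : ℝ)) with hBC
  set Bad : Finset ((Fin k → Bool) → Bool) := 𝒞.biUnion BC with hBad
  have hcount : (Bad.card : ℝ) < 2 ^ (2^k) := by
    have h1 : (Bad.card : ℕ) ≤ ∑ C ∈ 𝒞, (BC C).card := Finset.card_biUnion_le
    have h2 : (Bad.card : ℝ) ≤ ∑ C ∈ 𝒞, ((BC C).card : ℝ) := by exact_mod_cast h1
    have h3 : ∑ C ∈ 𝒞, ((BC C).card : ℝ)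
        ≤ (𝒞.card : ℝ) * (2 ^ (2^k) * Real.exp (-(2 * (1/2 - δ)^2 * (2:ℝ)^k))) := by
      calc ∑ C ∈ 𝒞, ((BC C).card : ℝ)
          ≤ ∑ _C ∈ 𝒞, (2 ^ (2^k) * Real.exp (-(2 * (1/2 - δ)^2 * (2:ℝ)^k))) :=
            Finset.sum_le_sum fun C _ => perC_bound k δ hδ C
        _ = (𝒞.card : ℝ) * (2 ^ (2^k) * Real.exp (-(2 * (1/2 - δ)^2 * (2:ℝ)^k))) := by
            rw [Finset.sum_const, nsmul_eq_mul]
    have hpos : (0:ℝ) < 2 ^ (2^k) * Real.exp (-(2 * (1/2 - δ)^2 * (2:ℝ)^k)) := by positivity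
    have h4 : (𝒞.card : ℝ) * (2 ^ (2^k) * Real.exp (-(2 * (1/2 - δ)^2 * (2:ℝ)^k)))
        < (1/2) * Real.exp (2 * (1/2 - δ)^2 * (2:ℝ)^k)
          * (2 ^ (2^k) * Real.exp (-(2 * (1/2 - δ)^2 * (2:ℝ)^k))) :=
      mul_lt_mul_of_pos_right hcard hpos
    have h5 : (1/2) * Real.exp (2 * (1/2 - δ)^2 * (2:ℝ)^k)
          * (2 ^ (2^k) * Real.exp (-(2 * (1/2 - δ)^2 * (2:ℝ)^k)))
        = (1/2) * 2 ^ (2^k) := by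
      rw [mul_assoc, mul_comm (Real.exp _), mul_assoc, ← Real.exp_add]
      simp
    have : (Bad.card : ℝ) < (1/2) * 2 ^ (2^k) := by linarith
    nlinarith [pow_pos (by norm_num : (0:ℝ) < 2) (2^k)]
  have hnat : Bad.card < 2 ^ (2^k) := by exact_mod_cast hcount
  have hcu : Fintype.card ((Fin k → Bool) → Bool) = 2 ^ (2^k) := by simp
  obtain ⟨g, hg⟩ : ∃ g : (Fin k → Bool) → Bool, g ∉ Bad := by
    by_contra h
    push_neg at h
    have : Bad = Finset.univ := Finset.eq_univ_of_forall h
    rw [this, Finset.card_univ, hcu] at hnat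
    exact lt_irrefl _ hnat
  refine ⟨g, fun C hC => ?_⟩
  have hgC : g ∉ BC C := fun hmem => hg (Finset.mem_biUnion.2 ⟨C, hC, hmem⟩)
  rw [hBC] at hgC
  simp only [Finset.mem_filter, Finset.mem_univ, true_and, not_le] at hgC
  rw [div_lt_iff₀ (by positivity : (0:ℝ) < 2^k)]
  linarith
end
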